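/- Let φ: ℝ³ → ℝ⁴ be inverse stereographic projection, φ(x) = ( (|x|² − 1)/(|x|² + 1), 2x₁/(1 + |x|²), 2x₂/(1 + |x|²), 2x₃/(1 + |x|²) ). Then the Dirichlet energy of φ is finite and equals E₂(φ) = ½ ∫_{ℝ³} ‖Dφ(x)‖²_F dx = 6π². (Claim of Example 3 of the paper: inverse stereographic projection ℝ³ → S³ is conformal and has finite Dirichlet energy E₂ = 6π².) -/

import Mathlib

/-!
The energy density of inverse stereographic projection `ℝⁿ → Sⁿ` is `4n / (1 + |x|²)²`: the
height `(|x|² - 1)/(|x|² + 1)` contributes `16|x|²/(1 + |x|²)⁴` and the coordinates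
`2xⱼ/(1 + |x|²)` contribute `(4n(1 + |x|²)² - 16|x|²)/(1 + |x|²)⁴`. For `n = 3`, polar coordinates
give `∫_{ℝ³} (1 + |x|²)⁻² dx = 4π ∫₀^∞ r²/(1 + r²)² dr = 4π · π/4 = π²`, the radial integral
having the antiderivative `(arctan r - r/(1 + r²))/2`. Hence `E₂ = ½ · 12π² = 6π²`.
-/

noncomputable section

/-- The `i`-th partial derivative of a scalar function on `ℝ^m`. -/
def pd {m : ℕ} (i : Fin m) (f : (Fin m → ℝ) → ℝ) (x : Fin m → ℝ) : ℝ :=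
  fderiv ℝ f x (Pi.single i 1)

/-- Inverse stereographic projection `ℝ³ → S³ ⊂ ℝ⁴`. -/
def isp (x : Fin 3 → ℝ) : Fin 4 → ℝ :=
  ![((∑ i, x i ^ 2) - 1) / ((∑ i, x i ^ 2) + 1),
    2 * x 0 / (1 + ∑ i, x i ^ 2),
    2 * x 1 / (1 + ∑ i, x i ^ 2),
    2 * x 2 / (1 + ∑ i, x i ^ 2)]

open MeasureTheory Real Set Filter Topology

section PartialDerivatives

variable {n : ℕ}

lemma pd_eq_of_hasFDerivAt {f : (Fin n → ℝ) → ℝ} {f' : (Fin n → ℝ) →L[ℝ] ℝ} {x : Fin n → ℝ}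
    (hf : HasFDerivAt f f' x) (i : Fin n) : pd i f x = f' (Pi.single i 1) := by
  rw [pd, hf.fderiv]

lemma hasFDerivAt_sum_sq (x : Fin n → ℝ) :
    HasFDerivAt (fun y : Fin n → ℝ => ∑ k, y k ^ 2)
      (∑ k, (2 * x k) • ContinuousLinearMap.proj (R := ℝ) (φ := fun _ : Fin n => ℝ) k) x := by
  refine HasFDerivAt.fun_sum fun k _ => ?_
  simpa using (hasFDerivAt_apply (𝕜 := ℝ) k x).pow 2

lemma sum_sq_fderiv_apply_single (x : Fin n → ℝ) (i : Fin n) :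
    (∑ k, (2 * x k) • ContinuousLinearMap.proj (R := ℝ) (φ := fun _ : Fin n => ℝ) k)
      (Pi.single i 1) = 2 * x i := by
  simp [Pi.single_apply]

lemma pd_stereo_height (x : Fin n → ℝ) (i : Fin n) :
    pd i (fun y => (∑ k, y k ^ 2 - 1) / (∑ k, y k ^ 2 + 1)) x
      = 4 * x i / (1 + ∑ k, x k ^ 2) ^ 2 := by
  have hs : ∑ k, x k ^ 2 + 1 ≠ 0 := by positivity
  have hq : HasDerivAt (fun t : ℝ => (t - 1) / (t + 1)) (2 / (∑ k, x k ^ 2 + 1) ^ 2)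
      (∑ k, x k ^ 2) := by
    have hid := hasDerivAt_id' (x := ∑ k, x k ^ 2)
    refine ((hid.sub_const 1).div (hid.add_const 1) hs).congr_deriv ?_
    ring
  refine (pd_eq_of_hasFDerivAt (hq.comp_hasFDerivAt x (hasFDerivAt_sum_sq x)) i).trans ?_
  rw [smul_apply, sum_sq_fderiv_apply_single, smul_eq_mul]
  ring

lemma pd_stereo_coord (x : Fin n → ℝ) (i j : Fin n) :
    pd i (fun y => 2 * y j / (1 + ∑ k, y k ^ 2)) x
      = (2 * (if j = i then 1 else 0) * (1 + ∑ k, x k ^ 2) - 4 * x j * x i)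
          / (1 + ∑ k, x k ^ 2) ^ 2 := by
  have hs : 1 + ∑ k, x k ^ 2 ≠ 0 := by positivity
  have hinv : HasDerivAt (fun t : ℝ => (1 + t)⁻¹) (-1 / (1 + ∑ k, x k ^ 2) ^ 2)
      (∑ k, x k ^ 2) := by
    simpa using ((hasDerivAt_id _).const_add 1).fun_inv hs
  have h := ((hasFDerivAt_apply (𝕜 := ℝ) j x).const_mul 2).mul
    (hinv.comp_hasFDerivAt x (hasFDerivAt_sum_sq x))
  refine (pd_eq_of_hasFDerivAt h i).trans ?_
  simp only [add_apply, smul_apply, Function.comp_apply,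
    sum_sq_fderiv_apply_single, ContinuousLinearMap.proj_apply, smul_eq_mul, Pi.single_apply]
  field_simp
  ring

lemma sum_sum_stereo_coord_numerator_sq (x : Fin n → ℝ) (c : ℝ) :
    ∑ j, ∑ i, (2 * (if j = i then 1 else 0) * c - 4 * x j * x i) ^ 2
      = 4 * n * c ^ 2 - 16 * c * ∑ k, x k ^ 2 + 16 * (∑ k, x k ^ 2) ^ 2 := by
  have hterm : ∀ j i, (2 * (if j = i then 1 else 0) * c - 4 * x j * x i) ^ 2
      = (if j = i then 4 * c ^ 2 - 16 * c * x j ^ 2 else 0) + 16 * (x j ^ 2 * x i ^ 2) := by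
    intro j i
    split_ifs with h
    · subst h; ring
    · ring
  simp only [hterm, Finset.sum_add_distrib, Finset.sum_ite_eq, Finset.mem_univ, if_true,
    ← Finset.mul_sum, Finset.sum_sub_distrib, Finset.sum_const, Finset.card_univ, Fintype.card_fin,
    nsmul_eq_mul, Finset.sum_mul_sum, sq]
  ring

lemma sum_sq_pd_stereo (x : Fin n → ℝ) :
    ∑ i, pd i (fun y => (∑ k, y k ^ 2 - 1) / (∑ k, y k ^ 2 + 1)) x ^ 2
      + ∑ j, ∑ i, pd i (fun y => 2 * y j / (1 + ∑ k, y k ^ 2)) x ^ 2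
      = 4 * n / (1 + ∑ k, x k ^ 2) ^ 2 := by
  have hc : 1 + ∑ k, x k ^ 2 ≠ 0 := by positivity
  simp only [pd_stereo_height, pd_stereo_coord, div_pow, ← Finset.sum_div]
  rw [sum_sum_stereo_coord_numerator_sq]
  field_simp
  simp only [← Finset.mul_sum]
  ring

end PartialDerivatives

lemma isp_energy_density (x : Fin 3 → ℝ) :
    ∑ a, ∑ i, pd i (fun y => isp y a) x ^ 2 = 12 / (1 + ∑ k, x k ^ 2) ^ 2 := by
  have hcoord : ∀ j : Fin 3, (fun y => isp y j.succ) = fun y => 2 * y j / (1 + ∑ k, y k ^ 2) := by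
    intro j
    fin_cases j <;> rfl
  rw [Fin.sum_univ_succ]
  simp only [hcoord]
  rw [show (fun y => isp y 0) = fun y => (∑ k, y k ^ 2 - 1) / (∑ k, y k ^ 2 + 1) from rfl,
    sum_sq_pd_stereo]
  norm_num

lemma hasDerivAt_arctan_sub_div_one_add_sq (r : ℝ) :
    HasDerivAt (fun r => (arctan r - r / (1 + r ^ 2)) / 2) (r ^ 2 / (1 + r ^ 2) ^ 2) r := by
  have hr : 1 + r ^ 2 ≠ 0 := by positivity
  have h := ((hasDerivAt_arctan r).sub
    ((hasDerivAt_id' (x := r)).div ((hasDerivAt_pow 2 r).const_add 1) hr)).div_const 2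
  refine h.congr_deriv ?_
  field_simp
  ring

lemma tendsto_div_one_add_sq_atTop : Tendsto (fun r : ℝ => r / (1 + r ^ 2)) atTop (𝓝 0) := by
  refine tendsto_of_tendsto_of_tendsto_of_le_of_le' tendsto_const_nhds tendsto_inv_atTop_zero
    ?_ ?_
  · filter_upwards [eventually_ge_atTop 0] with r hr
    positivity
  · filter_upwards [eventually_gt_atTop 0] with r hr
    rw [div_le_iff₀ (by positivity)]
    field_simp
    linarith [sq_nonneg r]

lemma tendsto_arctan_sub_div_one_add_sq_atTop :
    Tendsto (fun r => (arctan r - r / (1 + r ^ 2)) / 2) atTop (𝓝 (π / 4)) := by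
  have h := ((tendsto_arctan_atTop.mono_right nhdsWithin_le_nhds).sub
    tendsto_div_one_add_sq_atTop).div_const 2
  convert h using 2
  ring

lemma integrableOn_Ioi_sq_div_one_add_sq_sq :
    IntegrableOn (fun r : ℝ => r ^ 2 / (1 + r ^ 2) ^ 2) (Ioi 0) :=
  integrableOn_Ioi_deriv_of_nonneg' (fun r _ => hasDerivAt_arctan_sub_div_one_add_sq r)
    (fun r _ => by positivity) tendsto_arctan_sub_div_one_add_sq_atTop

lemma integral_Ioi_sq_div_one_add_sq_sq :
    ∫ r in Ioi (0 : ℝ), r ^ 2 / (1 + r ^ 2) ^ 2 = π / 4 := by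
  rw [integral_Ioi_of_hasDerivAt_of_nonneg' (fun r _ => hasDerivAt_arctan_sub_div_one_add_sq r)
    (fun r _ => by positivity) tendsto_arctan_sub_div_one_add_sq_atTop]
  simp

lemma integrable_one_div_one_add_norm_sq_sq :
    Integrable fun y : EuclideanSpace ℝ (Fin 3) => 1 / (1 + ‖y‖ ^ 2) ^ 2 := by
  refine (integrable_fun_norm_addHaar volume (f := fun r => 1 / (1 + r ^ 2) ^ 2)).2 ?_
  simpa only [finrank_euclideanSpace_fin, Nat.reduceSub, smul_eq_mul, mul_one_div]
    using integrableOn_Ioi_sq_div_one_add_sq_sq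

lemma integral_one_div_one_add_norm_sq_sq :
    ∫ y : EuclideanSpace ℝ (Fin 3), 1 / (1 + ‖y‖ ^ 2) ^ 2 = π ^ 2 := by
  rw [integral_fun_norm_addHaar volume (fun r => 1 / (1 + r ^ 2) ^ 2)]
  simp only [finrank_euclideanSpace_fin, Nat.reduceSub, smul_eq_mul, mul_one_div,
    integral_Ioi_sq_div_one_add_sq_sq, measureReal_def, EuclideanSpace.volume_ball_fin_three]
  rw [ENNReal.toReal_mul, ENNReal.toReal_pow, ENNReal.toReal_ofReal zero_le_one,
    ENNReal.toReal_ofReal (by positivity)]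
  ring

-- `Fin n → ℝ` carries the sup norm; polar coordinates need the Euclidean one.
section EuclideanTransfer

variable {n : ℕ}

lemma integrable_comp_sum_sq_iff (g : ℝ → ℝ) :
    Integrable (fun x : Fin n → ℝ => g (∑ k, x k ^ 2))
      ↔ Integrable fun y : EuclideanSpace ℝ (Fin n) => g (‖y‖ ^ 2) := by
  rw [← (EuclideanSpace.volume_preserving_symm_measurableEquiv_toLp (Fin n)).integrable_comp_emb
    (MeasurableEquiv.measurableEmbedding _)]
  simp [EuclideanSpace.real_norm_sq_eq, Function.comp_def]

lemma integral_comp_sum_sq (g : ℝ → ℝ) :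
    ∫ x : Fin n → ℝ, g (∑ k, x k ^ 2) = ∫ y : EuclideanSpace ℝ (Fin n), g (‖y‖ ^ 2) := by
  rw [← (EuclideanSpace.volume_preserving_symm_measurableEquiv_toLp (Fin n)).integral_comp
    (MeasurableEquiv.measurableEmbedding _)]
  simp [EuclideanSpace.real_norm_sq_eq]

end EuclideanTransfer

/-- Example 3: inverse stereographic projection has finite Dirichlet energy `E₂ = 6π²`. -/
theorem stmt18 :
    MeasureTheory.Integrable
      (fun x : Fin 3 → ℝ => ∑ a, ∑ i, (pd i (fun y => isp y a) x) ^ 2)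
    ∧ (1 / 2 : ℝ) * (∫ x : Fin 3 → ℝ, ∑ a, ∑ i, (pd i (fun y => isp y a) x) ^ 2)
        = 6 * Real.pi ^ 2 := by
  have hdensity : (fun x : Fin 3 → ℝ => ∑ a, ∑ i, (pd i (fun y => isp y a) x) ^ 2)
      = fun x => 12 * (1 / (1 + ∑ k, x k ^ 2) ^ 2) := by
    ext x
    rw [isp_energy_density, mul_one_div]
  have hintegrable : Integrable fun x : Fin 3 → ℝ => 1 / (1 + ∑ k, x k ^ 2) ^ 2 :=
    (integrable_comp_sum_sq_iff fun t => 1 / (1 + t) ^ 2).2 integrable_one_div_one_add_norm_sq_sq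
  rw [hdensity]
  refine ⟨hintegrable.const_mul 12, ?_⟩
  rw [integral_const_mul, integral_comp_sum_sq fun t => 1 / (1 + t) ^ 2,
    integral_one_div_one_add_norm_sq_sq]
  ring
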